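/- Fix N ≥ 1 and let x, y : {1,…,N} → ℕ be the indicator functions of single ranks s and t respectively (i.e., x(m) = 1 if m = s and 0 otherwise, y(m) = 1 if m = t and 0 otherwise, with 1 ≤ s, t ≤ N). Then the strong order constraints Σ_{m ≤ ℓ} x(m) + Σ_{m ≥ ℓ} y(m) ≤ 1 hold for every ℓ ∈ {1,…,N} if and only if the weak order constraint Σ_{ℓ=1}^{N} ( Σ_{m ≤ ℓ} x(m) + Σ_{m ≥ ℓ} y(m) ) ≤ N holds. -/
import Mathlib


/-- On indicator solutions of single ranks, the strong order constraints and
the (aggregated) weak order constraint impose the same restriction. -/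
theorem soc_iff_woc_on_indicators
    (N : ℕ) (hN : 1 ≤ N)
    (s t : ℕ) (hs1 : 1 ≤ s) (hs2 : s ≤ N) (ht1 : 1 ≤ t) (ht2 : t ≤ N)
    (x y : ℕ → ℕ)
    (hx : ∀ m, x m = if m = s then 1 else 0)
    (hy : ∀ m, y m = if m = t then 1 else 0) :
    (∀ ℓ ∈ Finset.Icc 1 N,
        (∑ m ∈ Finset.Icc 1 ℓ, x m) + ∑ m ∈ Finset.Icc ℓ N, y m ≤ 1)
      ↔ (∑ ℓ ∈ Finset.Icc 1 N,
            ((∑ m ∈ Finset.Icc 1 ℓ, x m) + ∑ m ∈ Finset.Icc ℓ N, y m)) ≤ N := by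
  have hX : ∀ ℓ, (∑ m ∈ Finset.Icc 1 ℓ, x m) = if s ≤ ℓ then 1 else 0 := by
    intro ℓ
    simp only [hx]
    rw [Finset.sum_ite_eq' (Finset.Icc 1 ℓ) s (fun _ => 1)]
    simp [Finset.mem_Icc, hs1]
  have hY : ∀ ℓ, (∑ m ∈ Finset.Icc ℓ N, y m) = if ℓ ≤ t then 1 else 0 := by
    intro ℓ
    simp only [hy]
    rw [Finset.sum_ite_eq' (Finset.Icc ℓ N) t (fun _ => 1)]
    simp [Finset.mem_Icc, ht2]
  have hsum : (∑ ℓ ∈ Finset.Icc 1 N,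
      ((∑ m ∈ Finset.Icc 1 ℓ, x m) + ∑ m ∈ Finset.Icc ℓ N, y m))
      = (N + 1 - s) + t := by
    simp only [hX, hY, Finset.sum_add_distrib]
    rw [Finset.sum_ite, Finset.sum_ite]
    simp only [Finset.sum_const, Finset.sum_const_zero, smul_eq_mul, mul_one, add_zero]
    have h1 : Finset.filter (fun ℓ => s ≤ ℓ) (Finset.Icc 1 N) = Finset.Icc s N := by
      ext a; simp [Finset.mem_Icc, Finset.mem_filter]; omega
    have h2 : Finset.filter (fun ℓ => ℓ ≤ t) (Finset.Icc 1 N) = Finset.Icc 1 t := by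
      ext a; simp [Finset.mem_Icc, Finset.mem_filter]; omega
    rw [h1, h2, Nat.card_Icc, Nat.card_Icc]
    omega
  constructor
  · intro h
    rw [hsum]
    by_contra hc
    have hst : s ≤ t := by omega
    have := h s (by simp [Finset.mem_Icc]; omega)
    rw [hX, hY] at this
    simp [hst] at this
  · intro h
    rw [hsum] at h
    intro ℓ hℓ
    rw [hX, hY]
    split <;> split <;> omega
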